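/- Let (Y,Z) be a dual pair of real vector spaces, A ⊆ Y a weakly closed convex set containing zero, and C ⊆ Y a weakly closed cone. Then the one-sided polar of A ∩ C equals the weak*-closure of A° + C°: (A ∩ C)° = cl(A° + C°). -/

import Mathlib

/-!
By the one-sided bipolar theorem (Hahn–Banach, plus the fact that every weakly continuous
functional is a pairing), the weak*-closure of the convex set `A° + C° ∋ 0` is the polar of
`(A° + C°)°`, and `(A° + C°)° ⊆ A°° ∩ C°° = A ∩ C` because `0` lies in both polars; antitonicity
of the polar gives `(A ∩ C)° ⊆ cl(A° + C°)`. Conversely `A° + C° ⊆ (A ∩ C)°`, since the polar of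
a cone pairs nonpositively with it, and `(A ∩ C)°` is weak*-closed.
-/

open Pointwise

namespace LinearMap

variable {E F : Type*} [AddCommGroup E] [Module ℝ E] [AddCommGroup F] [Module ℝ F]
  (B : E →ₗ[ℝ] F →ₗ[ℝ] ℝ)

def oneSidedPolar (s : Set E) : Set F :=
  {z | ∀ y ∈ s, B y z ≤ 1}

theorem oneSidedPolar_eq_iInter (s : Set E) :
    B.oneSidedPolar s = ⋂ y ∈ s, {z | B y z ≤ 1} := by
  ext z
  simp [oneSidedPolar]

theorem oneSidedPolar_antitone : Antitone (B.oneSidedPolar : Set E → Set F) :=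
  fun _ _ hst _ hz y hy => hz y (hst hy)

theorem zero_mem_oneSidedPolar (s : Set E) : (0 : F) ∈ B.oneSidedPolar s :=
  fun y _ => by simp

theorem convex_oneSidedPolar (s : Set E) : Convex ℝ (B.oneSidedPolar s) := by
  rw [oneSidedPolar_eq_iInter]
  exact convex_iInter₂ fun y _ => convex_halfSpace_le (B y).isLinear 1

theorem isClosed_oneSidedPolar (s : Set E) :
    IsClosed (X := WeakBilin B.flip) (B.oneSidedPolar s) := by
  rw [oneSidedPolar_eq_iInter]
  exact isClosed_biInter fun y _ =>
    isClosed_Iic.preimage (WeakBilin.eval_continuous B.flip y)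

theorem oneSidedPolar_closure (s : Set F) :
    B.flip.oneSidedPolar (closure (X := WeakBilin B.flip) s) = B.flip.oneSidedPolar s := by
  refine (B.flip.oneSidedPolar_antitone (subset_closure (X := WeakBilin B.flip))).antisymm
    fun y hy => ?_
  have hclosed : IsClosed (X := WeakBilin B.flip) {z : F | B y z ≤ 1} :=
    isClosed_Iic.preimage (WeakBilin.eval_continuous B.flip y)
  exact closure_minimal (X := WeakBilin B.flip) hy hclosed

theorem oneSidedPolar_flip_oneSidedPolar {s : Set E} (hclosed : IsClosed (X := WeakBilin B) s)
    (hconv : Convex ℝ s) (h0 : (0 : E) ∈ s) : B.flip.oneSidedPolar (B.oneSidedPolar s) = s := by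
  refine subset_antisymm (fun y₀ hy₀ => ?_) fun y hy z hz => hz y hy
  by_contra hy₀s
  obtain ⟨f, u, hfs, hfy₀⟩ :=
    geometric_hahn_banach_closed_point (E := WeakBilin B) hconv hclosed hy₀s
  obtain ⟨z, rfl⟩ := dualEmbedding_surjective B f
  have hu : 0 < u := by simpa using hfs 0 h0
  -- Rescaling the separating functional by `u⁻¹` puts it in the polar of `s`.
  have hz : u⁻¹ • z ∈ B.oneSidedPolar s := fun y hy => by
    rw [map_smul, smul_eq_mul, inv_mul_le_iff₀ hu, mul_one]
    exact (hfs y hy).le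
  have := hy₀ _ hz
  rw [flip_apply, map_smul, smul_eq_mul, inv_mul_le_iff₀ hu, mul_one] at this
  exact this.not_gt hfy₀

theorem oneSidedPolar_oneSidedPolar_flip_eq_closure {s : Set F} (hconv : Convex ℝ s)
    (h0 : (0 : F) ∈ s) :
    B.oneSidedPolar (B.flip.oneSidedPolar s) = closure (X := WeakBilin B.flip) s := by
  rw [← oneSidedPolar_closure]
  exact B.flip.oneSidedPolar_flip_oneSidedPolar isClosed_closure
    (hconv.closure (E := WeakBilin B.flip)) (subset_closure (X := WeakBilin B.flip) h0)

theorem apply_nonpos_of_mem_oneSidedPolar {C : Set E} (hC : ∀ l : ℝ, 0 ≤ l → l • C ⊆ C)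
    {z : F} (hz : z ∈ B.oneSidedPolar C) {y : E} (hy : y ∈ C) : B y z ≤ 0 := by
  by_contra! hpos
  have h2y : (2 / B y z) • y ∈ C := hC _ (by positivity) (Set.smul_mem_smul_set hy)
  have := hz _ h2y
  rw [map_smul, smul_apply, smul_eq_mul, div_mul_cancel₀ 2 hpos.ne'] at this
  linarith

theorem add_oneSidedPolar_subset_oneSidedPolar_inter (A : Set E) {C : Set E}
    (hC : ∀ l : ℝ, 0 ≤ l → l • C ⊆ C) :
    B.oneSidedPolar A + B.oneSidedPolar C ⊆ B.oneSidedPolar (A ∩ C) := by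
  rintro _ ⟨z₁, hz₁, z₂, hz₂, rfl⟩ y ⟨hyA, hyC⟩
  rw [map_add]
  linarith [hz₁ y hyA, B.apply_nonpos_of_mem_oneSidedPolar hC hz₂ hyC]

end LinearMap

theorem Set.convex_of_add_subset_of_smul_subset {E : Type*} [AddCommGroup E] [Module ℝ E]
    {C : Set E} (hadd : C + C ⊆ C) (hsmul : ∀ l : ℝ, 0 ≤ l → l • C ⊆ C) : Convex ℝ C :=
  fun _ hx _ hy a b ha hb _ =>
    hadd (Set.add_mem_add (hsmul a ha (Set.smul_mem_smul_set hx))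
      (hsmul b hb (Set.smul_mem_smul_set hy)))

theorem Set.Nonempty.zero_mem_of_smul_subset {E : Type*} [AddCommGroup E] [Module ℝ E]
    {C : Set E} (hne : C.Nonempty) (hsmul : ∀ l : ℝ, 0 ≤ l → l • C ⊆ C) : (0 : E) ∈ C := by
  obtain ⟨c, hc⟩ := hne
  simpa using hsmul 0 le_rfl (Set.smul_mem_smul_set hc)

theorem onesided_polar_inter_cone
    {Y Z : Type*} [AddCommGroup Y] [Module ℝ Y] [AddCommGroup Z] [Module ℝ Z]
    (B : Y →ₗ[ℝ] Z →ₗ[ℝ] ℝ)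
    (A C : Set Y)
    (hAclosed : IsClosed (X := WeakBilin B) A) (hAconv : Convex ℝ A)
    (hA0 : (0 : Y) ∈ A)
    (hCclosed : IsClosed (X := WeakBilin B) C) (hCne : C.Nonempty)
    (hCadd : C + C ⊆ C) (hCsmul : ∀ l : ℝ, 0 ≤ l → l • C ⊆ C) :
    {z : Z | ∀ y ∈ A ∩ C, B y z ≤ 1} =
      closure (X := WeakBilin B.flip)
        ({z : Z | ∀ y ∈ A, B y z ≤ 1} + {z : Z | ∀ y ∈ C, B y z ≤ 1}) := by
  change B.oneSidedPolar (A ∩ C) =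
    closure (X := WeakBilin B.flip) (B.oneSidedPolar A + B.oneSidedPolar C)
  have hCconv := Set.convex_of_add_subset_of_smul_subset hCadd hCsmul
  have hC0 := hCne.zero_mem_of_smul_subset hCsmul
  refine subset_antisymm ?_ (closure_minimal (X := WeakBilin B.flip)
    (B.add_oneSidedPolar_subset_oneSidedPolar_inter A hCsmul) (B.isClosed_oneSidedPolar _))
  rw [← B.oneSidedPolar_oneSidedPolar_flip_eq_closure
    ((B.convex_oneSidedPolar A).add (B.convex_oneSidedPolar C))
    (by simpa using Set.add_mem_add (B.zero_mem_oneSidedPolar A) (B.zero_mem_oneSidedPolar C))]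
  refine B.oneSidedPolar_antitone (Set.subset_inter ?_ ?_)
  · calc B.flip.oneSidedPolar (B.oneSidedPolar A + B.oneSidedPolar C)
        ⊆ B.flip.oneSidedPolar (B.oneSidedPolar A) := B.flip.oneSidedPolar_antitone
          (Set.subset_add_left _ (B.zero_mem_oneSidedPolar C))
      _ = A := B.oneSidedPolar_flip_oneSidedPolar hAclosed hAconv hA0
  · calc B.flip.oneSidedPolar (B.oneSidedPolar A + B.oneSidedPolar C)
        ⊆ B.flip.oneSidedPolar (B.oneSidedPolar C) := B.flip.oneSidedPolar_antitone
          (Set.subset_add_right _ (B.zero_mem_oneSidedPolar A))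
      _ = C := B.oneSidedPolar_flip_oneSidedPolar hCclosed hCconv hC0
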